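/- arXiv:1403.7007 — 5 statements merged into one kernel-verified Lean document; each statement's English description precedes it below -/
import Mathlib

section
/- Let N, M1, M2, K1, K2 be positive reals with K1, K2 ≥ 4, N ≥ K1·K2, M1 + M2·K2 ≥ N, 0 ≤ M1 < N/2K1, and 3N/(4K2) ≤ M2 < N/4. Then with s2 = ⌊N/(2M2)⌋, the quantity s2·(N - M1 - s2·M2)/(N + s2) is at least (1/13)·min{K1·K2, N/M2}. -/
/-!
Write `s = ⌊N / (2 M₂)⌋`. Since `M₂ < N / 4` we have `s ≥ 2`, so `N / M₂ < 2 (s + 1) ≤ 3 s` and the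
minimum is at most `3 s`. On the other side `s M₂ ≤ N / 2` and `M₁ < N / (2 K₁) ≤ N / 8` leave at least
`3 N / 8` in the numerator, while `M₂ ≥ 3 N / (4 K₂) ≥ 3` gives `s ≤ N / 6`, so the denominator is
`N + s ≤ 13 N / 8`. Together the quantity is at least `(3 / 13) s`.
-/

lemma two_mul_le_three_mul_floor {x : ℝ} (hx : 2 ≤ x) : 2 * x ≤ 3 * ⌊x⌋ := by
  have hs : (2 : ℝ) ≤ ⌊x⌋ := by exact_mod_cast Int.le_floor.mpr (by exact_mod_cast hx)
  linarith [Int.lt_floor_add_one x]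

lemma three_le_of_three_mul_div_le {N M K₁ K₂ : ℝ} (hK₁ : 4 ≤ K₁) (hK₂ : 0 < K₂)
    (hN : K₁ * K₂ ≤ N) (hM : 3 * N / (4 * K₂) ≤ M) : 3 ≤ M := by
  rw [div_le_iff₀ (by positivity)] at hM
  nlinarith

lemma three_div_thirteen_mul_le_div {N D s : ℝ} (hN : 0 < N) (hs : 0 ≤ s) (hsN : s ≤ 5 * N / 8)
    (hD : 3 * N / 8 ≤ D) : 3 / 13 * s ≤ s * D / (N + s) := by
  rw [le_div_iff₀ (by linarith)]
  nlinarith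

theorem stmt_7_general (N M1 M2 K1 K2 : ℝ)
    (hN : 0 < N) (hM2 : 0 < M2) (hK1 : 4 ≤ K1) (hK2 : 4 ≤ K2)
    (hNK : N ≥ K1 * K2)
    (hM1u : M1 < N / (2 * K1)) (hM2l : 3 * N / (4 * K2) ≤ M2) (hM2u : M2 < N / 4) :
    (⌊N / (2 * M2)⌋ : ℝ) * (N - M1 - (⌊N / (2 * M2)⌋ : ℝ) * M2) / (N + (⌊N / (2 * M2)⌋ : ℝ))
      ≥ (1 / 13) * min (K1 * K2) (N / M2) := by
  set x := N / (2 * M2) with hx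
  have hx2 : 2 ≤ x := by rw [hx, le_div_iff₀ (by positivity)]; linarith
  have hs : (0 : ℝ) ≤ ⌊x⌋ := by exact_mod_cast Int.floor_nonneg.mpr (by linarith)
  have hmin : min (K1 * K2) (N / M2) ≤ 3 * ⌊x⌋ :=
    calc min (K1 * K2) (N / M2) ≤ 2 * x := min_le_right _ _ |>.trans_eq (by rw [hx]; field_simp)
      _ ≤ 3 * ⌊x⌋ := two_mul_le_three_mul_floor hx2
  have hsM2 : ⌊x⌋ * M2 ≤ N / 2 :=
    (mul_le_mul_of_nonneg_right (Int.floor_le x) hM2.le).trans_eq (by rw [hx]; field_simp)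
  have hM1 : M1 ≤ N / 8 :=
    hM1u.le.trans (div_le_div_of_nonneg_left hN.le (by norm_num) (by linarith))
  have hM2three : 3 ≤ M2 := three_le_of_three_mul_div_le hK1 (by linarith) hNK hM2l
  have hxN : x ≤ N / 6 := by
    rw [hx]; exact div_le_div_of_nonneg_left hN.le (by norm_num) (by linarith)
  calc (1 / 13) * min (K1 * K2) (N / M2) ≤ 3 / 13 * ⌊x⌋ := by linarith
    _ ≤ _ := three_div_thirteen_mul_le_div hN hs (by linarith [Int.floor_le x]) (by linarith)

theorem stmt_7 (N M1 M2 K1 K2 : ℝ)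
    (hN : 0 < N) (hM1 : 0 < M1) (hM2 : 0 < M2) (hK1 : 4 ≤ K1) (hK2 : 4 ≤ K2)
    (hNK : N ≥ K1 * K2) (hsum : M1 + M2 * K2 ≥ N)
    (hM1u : M1 < N / (2 * K1)) (hM2l : 3 * N / (4 * K2) ≤ M2) (hM2u : M2 < N / 4) :
    (⌊N / (2 * M2)⌋ : ℝ) * (N - M1 - (⌊N / (2 * M2)⌋ : ℝ) * M2) / (N + (⌊N / (2 * M2)⌋ : ℝ))
      ≥ (1 / 13) * min (K1 * K2) (N / M2) :=
  stmt_7_general N M1 M2 K1 K2 hN hM2 hK1 hK2 hNK hM1u hM2l hM2u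
end

section
/- Let N, M1, M2, K1, K2 be positive reals with K1, K2 ≥ 4, N ≥ K1·K2, N/(2K1) ≤ M1 < N/4, 3N/(4K2) ≤ M2 < N/4, and M1 ≥ M2. Then with s1 = ⌊N/(4M1)⌋ and s2 = ⌊M1/M2⌋, we have 1 ≤ s1 ≤ K1/2, 1 ≤ s2 ≤ K2/3, s1·s2 ≥ N/(16·M2), and s1·s2·(N - s1·M1 - s1·s2·M2)/(N + s1·s2) ≥ N/(35·M2). -/
/-!
With `s₁ = ⌊N / (4 M₁)⌋` and `s₂ = ⌊M₁ / M₂⌋`, both floors are taken of numbers at least `1`, so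
each lies between half its argument and the argument itself. Hence `s₁ s₂ ≥ N / (16 M₂)`, while
`s₁ s₂ M₂ ≤ s₁ M₁ ≤ N / 4` leaves `N - s₁ M₁ - s₁ s₂ M₂ ≥ N / 2`. The last bound then reduces to
`N + s₁ s₂ ≤ (35 / 2) M₂ s₁ s₂`, which holds as soon as `M₂ ≥ 2 / 3`; and `N ≥ K₁ K₂` together
with `M₂ ≥ 3N / (4K₂)` gives `M₂ ≥ 3`.
-/

lemma one_le_floor {x : ℝ} (hx : 1 ≤ x) : (1 : ℝ) ≤ ⌊x⌋ := by
  exact_mod_cast Int.le_floor.mpr (by exact_mod_cast hx)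

lemma half_le_floor {x : ℝ} (hx : 1 ≤ x) : x / 2 ≤ ⌊x⌋ := by
  rcases le_total x 2 with h2 | h2
  · linarith [one_le_floor hx]
  · linarith [Int.sub_one_lt_floor x]

lemma mul_div_four_le_floor_mul_floor {x y : ℝ} (hx : 1 ≤ x) (hy : 1 ≤ y) :
    x * y / 4 ≤ ⌊x⌋ * ⌊y⌋ := by
  have := mul_le_mul (half_le_floor hx) (half_le_floor hy) (by linarith)
    (by linarith [one_le_floor hx])
  linarith

lemma div_le_mul_div_add {N M t r : ℝ} (hN : 0 < N) (hM : 2 / 3 ≤ M)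
    (ht : N / (16 * M) ≤ t) (hr : N / 2 ≤ r) :
    N / (35 * M) ≤ t * r / (N + t) := by
  have hMpos : 0 < M := by linarith
  have htM : N ≤ 16 * M * t := by rwa [div_le_iff₀' (by positivity)] at ht
  have htpos : 0 < t := by nlinarith
  rw [div_le_div_iff₀ (by positivity) (by positivity)]
  have hslack : N + t ≤ 35 / 2 * M * t := by nlinarith
  calc N * (N + t) ≤ N * (35 / 2 * M * t) := mul_le_mul_of_nonneg_left hslack hN.le
    _ = N / 2 * (35 * M * t) := by ring
    _ ≤ r * (35 * M * t) := mul_le_mul_of_nonneg_right hr (by positivity)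
    _ = t * r * (35 * M) := by ring

theorem stmt_8_general (N M1 M2 K1 K2 : ℝ)
    (hN : 0 < N) (hM1 : 0 < M1) (hM2 : 0 < M2) (hK1 : 4 ≤ K1) (hK2 : 4 ≤ K2)
    (hNK : N ≥ K1 * K2)
    (hM1l : N / (2 * K1) ≤ M1) (hM1u : M1 < N / 4)
    (hM2l : 3 * N / (4 * K2) ≤ M2)
    (hM12 : M1 ≥ M2) :
    1 ≤ (⌊N / (4 * M1)⌋ : ℝ) ∧ (⌊N / (4 * M1)⌋ : ℝ) ≤ K1 / 2 ∧
    1 ≤ (⌊M1 / M2⌋ : ℝ) ∧ (⌊M1 / M2⌋ : ℝ) ≤ K2 / 3 ∧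
    (⌊N / (4 * M1)⌋ : ℝ) * (⌊M1 / M2⌋ : ℝ) ≥ N / (16 * M2) ∧
    (⌊N / (4 * M1)⌋ : ℝ) * (⌊M1 / M2⌋ : ℝ) *
        (N - (⌊N / (4 * M1)⌋ : ℝ) * M1 - (⌊N / (4 * M1)⌋ : ℝ) * (⌊M1 / M2⌋ : ℝ) * M2) /
        (N + (⌊N / (4 * M1)⌋ : ℝ) * (⌊M1 / M2⌋ : ℝ))
      ≥ N / (35 * M2) := by
  have hx₁ : 1 ≤ N / (4 * M1) := by rw [le_div_iff₀ (by positivity)]; linarith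
  have hx₂ : 1 ≤ M1 / M2 := by rwa [le_div_iff₀ hM2, one_mul]
  have hs₁M₁ : ⌊N / (4 * M1)⌋ * (4 * M1) ≤ N := (le_div_iff₀ (by positivity)).1 (Int.floor_le _)
  have hs₂M₂ : ⌊M1 / M2⌋ * M2 ≤ M1 := (le_div_iff₀ hM2).1 (Int.floor_le _)
  have hs₁s₂ : N / (16 * M2) ≤ ⌊N / (4 * M1)⌋ * ⌊M1 / M2⌋ := by
    convert mul_div_four_le_floor_mul_floor hx₁ hx₂ using 1
    field_simp; ring
  have hM₂ : 3 ≤ M2 := by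
    rw [div_le_iff₀ (by positivity)] at hM2l
    nlinarith
  set s₁ : ℝ := ((⌊N / (4 * M1)⌋ : ℤ) : ℝ)
  set s₂ : ℝ := ((⌊M1 / M2⌋ : ℤ) : ℝ)
  have hs₁ : 1 ≤ s₁ := one_le_floor hx₁
  refine ⟨hs₁, ?_, one_le_floor hx₂, ?_, hs₁s₂, ?_⟩
  · rw [div_le_iff₀ (by positivity)] at hM1l
    nlinarith
  · rw [div_le_iff₀ (by positivity)] at hM2l
    nlinarith
  · refine div_le_mul_div_add hN (by linarith) hs₁s₂ ?_
    nlinarith [mul_le_mul_of_nonneg_left hs₂M₂ (by linarith : 0 ≤ s₁)]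

theorem stmt_8 (N M1 M2 K1 K2 : ℝ)
    (hN : 0 < N) (hM1 : 0 < M1) (hM2 : 0 < M2) (hK1 : 4 ≤ K1) (hK2 : 4 ≤ K2)
    (hNK : N ≥ K1 * K2)
    (hM1l : N / (2 * K1) ≤ M1) (hM1u : M1 < N / 4)
    (hM2l : 3 * N / (4 * K2) ≤ M2) (hM2u : M2 < N / 4)
    (hM12 : M1 ≥ M2) :
    1 ≤ (⌊N / (4 * M1)⌋ : ℝ) ∧ (⌊N / (4 * M1)⌋ : ℝ) ≤ K1 / 2 ∧
    1 ≤ (⌊M1 / M2⌋ : ℝ) ∧ (⌊M1 / M2⌋ : ℝ) ≤ K2 / 3 ∧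
    (⌊N / (4 * M1)⌋ : ℝ) * (⌊M1 / M2⌋ : ℝ) ≥ N / (16 * M2) ∧
    (⌊N / (4 * M1)⌋ : ℝ) * (⌊M1 / M2⌋ : ℝ) *
        (N - (⌊N / (4 * M1)⌋ : ℝ) * M1 - (⌊N / (4 * M1)⌋ : ℝ) * (⌊M1 / M2⌋ : ℝ) * M2) /
        (N + (⌊N / (4 * M1)⌋ : ℝ) * (⌊M1 / M2⌋ : ℝ))
      ≥ N / (35 * M2) :=
  stmt_8_general N M1 M2 K1 K2 hN hM1 hM2 hK1 hK2 hNK hM1l hM1u hM2l hM12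
end

section
/- Let N, M1, M2, K1, K2 be positive reals with K1, K2 ≥ 4 (K1, K2 integers), N ≥ K1·K2, 0 ≤ M1 < N/K1, and 0 ≤ M2 < N/(K1·K2). Then with s1 = ⌊K1/3⌋ and s2 = K2, we have s1·s2·(N - s1·M1 - s1·s2·M2)/(N + s1·s2) ≥ K1·K2/24. -/
/-!
Write `s = ⌊K₁/3⌋`, so that `3s ≤ K₁ ≤ 6s`. Since `s ≤ K₁/3`, each of the loads `s·M₁` and
`s·K₂·M₂` is below `N/3`, leaving at least `N/3` in the numerator, while `s·K₂ ≤ K₁K₂/3 ≤ N/3`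
keeps the denominator below `4N/3`. The ratio is therefore at least `s·K₂/4 ≥ K₁K₂/24`.
-/

theorem Nat.le_six_mul_div_three {n : ℕ} (h : 3 ≤ n) : n ≤ 6 * (n / 3) := by
  omega

theorem three_mul_mul_le_of_lt_div {s K M N : ℝ} (hK : 0 < K) (hsK : 3 * s ≤ K) (hM : 0 ≤ M)
    (hMN : M < N / K) : 3 * (s * M) ≤ N :=
  calc 3 * (s * M) = 3 * s * M := by ring
    _ ≤ K * M := mul_le_mul_of_nonneg_right hsK hM
    _ ≤ N := ((lt_div_iff₀' hK).mp hMN).le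

theorem div_four_le_mul_div_add {x y N : ℝ} (hx : 0 ≤ x) (hxN : 3 * x ≤ N) (hy : N / 3 ≤ y) :
    x / 4 ≤ x * y / (N + x) := by
  rcases hx.eq_or_lt with rfl | hx
  · simp
  rw [div_le_div_iff₀ (by norm_num) (by linarith)]
  nlinarith [mul_le_mul_of_nonneg_left hy hx.le]

theorem stmt_10_general (N M1 M2 : ℝ) (K1 K2 : ℕ)
    (hK1 : 4 ≤ K1) (hK2 : 4 ≤ K2) (hNK : N ≥ (K1 : ℝ) * K2)
    (hM1l : 0 ≤ M1) (hM1u : M1 < N / K1)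
    (hM2l : 0 ≤ M2) (hM2u : M2 < N / ((K1 : ℝ) * K2)) :
    ((K1 / 3 : ℕ) : ℝ) * K2 *
        (N - ((K1 / 3 : ℕ) : ℝ) * M1 - ((K1 / 3 : ℕ) : ℝ) * K2 * M2) /
        (N + ((K1 / 3 : ℕ) : ℝ) * K2)
      ≥ (K1 : ℝ) * K2 / 24 := by
  set s : ℝ := ((K1 / 3 : ℕ) : ℝ)
  have hs_le : 3 * s ≤ K1 := by
    simp only [s]; exact_mod_cast Nat.mul_div_le K1 3
  have hs_ge : (K1 : ℝ) ≤ 6 * s := by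
    simp only [s]; exact_mod_cast Nat.le_six_mul_div_three (n := K1) (by omega)
  have hK1_pos : (0 : ℝ) < K1 := by positivity
  have hK2_pos : (0 : ℝ) < K2 := by positivity
  have hsK2_le : 3 * (s * K2) ≤ K1 * K2 := by nlinarith
  have hM1 := three_mul_mul_le_of_lt_div hK1_pos hs_le hM1l hM1u
  have hM2 := three_mul_mul_le_of_lt_div (by positivity) hsK2_le hM2l hM2u
  calc (K1 : ℝ) * K2 / 24 ≤ s * K2 / 4 := by nlinarith
    _ ≤ _ := div_four_le_mul_div_add (by positivity) (by linarith) (by linarith)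

theorem stmt_10 (N M1 M2 : ℝ) (K1 K2 : ℕ)
    (hN : 0 < N) (hK1 : 4 ≤ K1) (hK2 : 4 ≤ K2) (hNK : N ≥ (K1 : ℝ) * K2)
    (hM1l : 0 ≤ M1) (hM1u : M1 < N / K1)
    (hM2l : 0 ≤ M2) (hM2u : M2 < N / ((K1 : ℝ) * K2)) :
    ((K1 / 3 : ℕ) : ℝ) * K2 *
        (N - ((K1 / 3 : ℕ) : ℝ) * M1 - ((K1 / 3 : ℕ) : ℝ) * K2 * M2) /
        (N + ((K1 / 3 : ℕ) : ℝ) * K2)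
      ≥ (K1 : ℝ) * K2 / 24 :=
  stmt_10_general N M1 M2 K1 K2 hK1 hK2 hNK hM1l hM1u hM2l hM2u
end

section
/- Let N, M1, M2, K1, K2 be positive reals with K1, K2 ≥ 4 (integers), N ≥ K1·K2, N/4 ≤ M1 ≤ N, and (N-M1)/K2 ≤ M2 < (N-M1)/2. Then with s2 = ⌊(N-M1)/(2·M2)⌋, we have 1 ≤ s2 ≤ K2/2, and s2·(N - M1 - s2·M2)/(N + s2) ≥ (N - M1)²/(9·M2·N). -/
/-!
Write `D = N - M1` and `x = D / (2 M2) ≥ 1`. The floor `s = ⌊x⌋` satisfies `x / 2 ≤ s ≤ x`, so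
`s ≥ D / (4 M2)` and `D - s M2 ≥ D / 2`, whence `s (D - s M2) ≥ D² / (8 M2)`. On the other side
`s ≤ x ≤ K2 / 2`, and `N ≥ K1 K2 ≥ 4 K2` gives `s ≤ N / 8`, so `N + s ≤ 9 N / 8`.
-/

lemma sq_div_le_mul_sub_mul {D M s : ℝ} (hM : 0 < M)
    (hs_lo : D ≤ 4 * M * s) (hs_hi : 2 * (s * M) ≤ D) :
    D ^ 2 / (8 * M) ≤ s * (D - s * M) := by
  have hsM : 0 ≤ s * M := by linarith
  rw [div_le_iff₀ (by positivity)]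
  nlinarith [mul_le_mul hs_lo (show D ≤ 2 * (D - s * M) by linarith) (by linarith) (by linarith)]

lemma sq_div_le_floor_mul_sub_floor_mul {D M : ℝ} (hM : 0 < M) (hD : 2 * M ≤ D) :
    D ^ 2 / (8 * M) ≤ ⌊D / (2 * M)⌋ * (D - ⌊D / (2 * M)⌋ * M) := by
  have h2M : 0 < 2 * M := by positivity
  have hx : D / (2 * M) * (2 * M) = D := div_mul_cancel₀ D h2M.ne'
  have hs_lo := Int.div_two_lt_floor ((one_le_div h2M).mpr hD)
  have hs_hi := Int.floor_le (D / (2 * M))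
  apply sq_div_le_mul_sub_mul hM <;> nlinarith

lemma sq_div_le_div_add {D P M N s : ℝ} (hM : 0 < M) (hN : 0 < N) (hs : 0 ≤ s)
    (hsN : s ≤ N / 8) (hP : D ^ 2 / (8 * M) ≤ P) :
    D ^ 2 / (9 * M * N) ≤ P / (N + s) := by
  rw [div_le_iff₀ (by positivity)] at hP
  rw [div_le_div_iff₀ (by positivity) (by positivity)]
  nlinarith [sq_nonneg D]

theorem stmt_14_general (N M1 M2 : ℝ) (K1 K2 : ℕ)
    (hM2 : 0 < M2) (hK1 : 4 ≤ K1) (hK2 : 4 ≤ K2)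
    (hNK : N ≥ (K1 : ℝ) * K2)
    (hM2l : (N - M1) / K2 ≤ M2) (hM2u : M2 < (N - M1) / 2) :
    1 ≤ (⌊(N - M1) / (2 * M2)⌋ : ℝ) ∧ (⌊(N - M1) / (2 * M2)⌋ : ℝ) ≤ (K2 : ℝ) / 2 ∧
    (⌊(N - M1) / (2 * M2)⌋ : ℝ) * (N - M1 - (⌊(N - M1) / (2 * M2)⌋ : ℝ) * M2) /
        (N + (⌊(N - M1) / (2 * M2)⌋ : ℝ))
      ≥ (N - M1) ^ 2 / (9 * M2 * N) := by
  have hK1' : (4 : ℝ) ≤ K1 := by exact_mod_cast hK1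
  have hK2' : (4 : ℝ) ≤ K2 := by exact_mod_cast hK2
  have hD : 2 * M2 ≤ N - M1 := by linarith
  have hDK : N - M1 ≤ K2 * M2 := by rwa [div_le_iff₀ (by positivity), mul_comm] at hM2l
  have hs_one : (1 : ℝ) ≤ ⌊(N - M1) / (2 * M2)⌋ := by
    exact_mod_cast Int.le_floor.mpr (by simpa using (one_le_div (by positivity)).mpr hD)
  have hs_half : (⌊(N - M1) / (2 * M2)⌋ : ℝ) ≤ K2 / 2 :=
    (Int.floor_le _).trans <| by
      rw [div_le_div_iff₀ (by positivity) two_pos]; nlinarith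
  have hK2N : (K2 : ℝ) ≤ N / 4 := by nlinarith
  exact ⟨hs_one, hs_half, sq_div_le_div_add hM2 (by linarith) (by linarith) (by linarith)
    (sq_div_le_floor_mul_sub_floor_mul hM2 hD)⟩

theorem stmt_14 (N M1 M2 : ℝ) (K1 K2 : ℕ)
    (hN : 0 < N) (hM2 : 0 < M2) (hK1 : 4 ≤ K1) (hK2 : 4 ≤ K2)
    (hNK : N ≥ (K1 : ℝ) * K2)
    (hM1l : N / 4 ≤ M1) (hM1u : M1 ≤ N)
    (hM2l : (N - M1) / K2 ≤ M2) (hM2u : M2 < (N - M1) / 2) :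
    1 ≤ (⌊(N - M1) / (2 * M2)⌋ : ℝ) ∧ (⌊(N - M1) / (2 * M2)⌋ : ℝ) ≤ (K2 : ℝ) / 2 ∧
    (⌊(N - M1) / (2 * M2)⌋ : ℝ) * (N - M1 - (⌊(N - M1) / (2 * M2)⌋ : ℝ) * M2) /
        (N + (⌊(N - M1) / (2 * M2)⌋ : ℝ))
      ≥ (N - M1) ^ 2 / (9 * M2 * N) :=
  stmt_14_general N M1 M2 K1 K2 hM2 hK1 hK2 hNK hM2l hM2u
end

section
/- Let N, M1, M2, K1, K2 be positive reals with K1, K2 ≥ 4 (integers), N ≥ K1·K2, N/K1 ≤ M1 < N/4, and 0 ≤ M2 < N/(4·K2). Then with s1 = ⌊N/(2·(M1 + M2·K2))⌋ and s2 = K2, we have 1 ≤ s1 ≤ K1/2, and s1·K2·(N - s1·(M1 + M2·K2))/(N + s1·K2) ≥ N·K2/(12·(M1 + M2·K2)). -/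
/-!
With `D = M1 + M2 K2`, the hypotheses give `2 D < N ≤ K1 D`, so `x = N / (2 D)` lies in `[1, K1 / 2]`
and its floor `s` satisfies `x / 2 ≤ s ≤ x`. Then `s D ≤ N / 2` and `s K2 ≤ K1 K2 / 2 ≤ N / 2`, so
the numerator is at least `(x / 2) K2 (N / 2)` and the denominator at most `3 N / 2`, whose
quotient is exactly `N K2 / (12 D)`.
-/

theorem Int.half_le_floor_of_one_le {α : Type*} [Field α] [LinearOrder α] [IsStrictOrderedRing α]
    [FloorRing α] {x : α} (hx : 1 ≤ x) : x / 2 ≤ ⌊x⌋ := by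
  rcases le_or_gt x 2 with hx2 | hx2
  · have : (1 : α) ≤ ⌊x⌋ := by exact_mod_cast Int.le_floor.mpr (by exact_mod_cast hx)
    linarith
  · linarith [Int.sub_one_lt_floor x]

noncomputable def cutSetBound (N D K s : ℝ) : ℝ := s * K * (N - s * D) / (N + s * K)

theorem le_cutSetBound {N D K s : ℝ} (hN : 0 < N) (hD : 0 < D) (hK : 0 ≤ K)
    (hs : N / (4 * D) ≤ s) (hsD : s * D ≤ N / 2) (hsK : s * K ≤ N / 2) :
    N * K / (12 * D) ≤ cutSetBound N D K s := by
  have hs0 : 0 ≤ s := (by positivity : 0 ≤ N / (4 * D)).trans hs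
  have hnum : N / (4 * D) * K * (N / 2) ≤ s * K * (N - s * D) :=
    mul_le_mul (mul_le_mul_of_nonneg_right hs hK) (by linarith) (by positivity) (by positivity)
  calc N * K / (12 * D) = N / (4 * D) * K * (N / 2) / (3 * N / 2) := by
        field_simp; ring
    _ ≤ cutSetBound N D K s :=
        div_le_div₀ ((by positivity : (0 : ℝ) ≤ _).trans hnum) hnum (by positivity) (by linarith)

theorem stmt_19 (N M1 M2 : ℝ) (K1 K2 : ℕ)
    (hN : 0 < N) (hK1 : 4 ≤ K1) (hK2 : 4 ≤ K2) (hNK : N ≥ (K1 : ℝ) * K2)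
    (hM1l : N / K1 ≤ M1) (hM1u : M1 < N / 4)
    (hM2l : 0 ≤ M2) (hM2u : M2 < N / (4 * K2)) :
    1 ≤ (⌊N / (2 * (M1 + M2 * K2))⌋ : ℝ) ∧
    (⌊N / (2 * (M1 + M2 * K2))⌋ : ℝ) ≤ (K1 : ℝ) / 2 ∧
    (⌊N / (2 * (M1 + M2 * K2))⌋ : ℝ) * K2 *
        (N - (⌊N / (2 * (M1 + M2 * K2))⌋ : ℝ) * (M1 + M2 * K2)) /
        (N + (⌊N / (2 * (M1 + M2 * K2))⌋ : ℝ) * K2)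
      ≥ N * K2 / (12 * (M1 + M2 * K2)) := by
  have hK1pos : (0 : ℝ) < K1 := Nat.cast_pos.mpr (by omega)
  have hK2pos : (0 : ℝ) < K2 := Nat.cast_pos.mpr (by omega)
  have hN_le : N ≤ M1 * K1 := (div_le_iff₀ hK1pos).mp hM1l
  have hM2K2 : M2 * K2 < N / 4 := by
    calc M2 * K2 < N / (4 * K2) * K2 := mul_lt_mul_of_pos_right hM2u hK2pos
      _ = N / 4 := by field_simp
  set D := M1 + M2 * K2
  have hD : 0 < D := by nlinarith [mul_nonneg hM2l hK2pos.le]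
  set x := N / (2 * D)
  have hxD : x * D = N / 2 := by simp only [x]; field_simp
  have hx1 : 1 ≤ x := by rw [le_div_iff₀ (by positivity)]; linarith
  have hxK1 : x ≤ K1 / 2 := by
    rw [div_le_div_iff₀ (by positivity) two_pos]
    nlinarith [mul_nonneg (mul_nonneg hM2l hK2pos.le) hK1pos.le]
  have hs1 : (1 : ℝ) ≤ ⌊x⌋ := by exact_mod_cast Int.le_floor.mpr (by exact_mod_cast hx1)
  have hsx : (⌊x⌋ : ℝ) ≤ x := Int.floor_le x
  refine ⟨hs1, hsx.trans hxK1, le_cutSetBound hN hD hK2pos.le ?_ ?_ ?_⟩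
  · calc N / (4 * D) = x / 2 := by simp only [x]; field_simp; ring
      _ ≤ ⌊x⌋ := Int.half_le_floor_of_one_le hx1
  · exact (mul_le_mul_of_nonneg_right hsx hD.le).trans hxD.le
  · nlinarith [mul_le_mul_of_nonneg_right (hsx.trans hxK1) hK2pos.le]
end
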